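/- arXiv:1408.3913 — 5 statements merged into one kernel-verified Lean document; each statement's English description precedes it below -/
import Mathlib

section
/- Let g be a Heisenberg restricted Lie algebra of dimension 2n−1 over an algebraically closed field of characteristic p > 2, with center z and quotient W = g/z equipped with its induced symplectic form, and let φ: g → W be the projection. Then ε ↦ φ(ε) gives a bijection between elementary subalgebras of g of dimension n and Lagrangian (i.e., maximal isotropic, dimension n−1) subspaces of W; in particular, for every Lagrangian subspace L ⊆ W, the preimage φ^{-1}(L) is an elementary subalgebra of g of dimension n. -/
/-!
If `yn` were `0` the bracket would vanish, making `L` its own centre `k ∙ yn = 0`; so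
`𝔷 = k ∙ yn` is a line and `⁅x, y⁆ = 0` exactly when `B x̄ ȳ = 0`. In particular `B` is
alternating and nondegenerate on `W = L ⧸ 𝔷`, which has dimension `2n - 2`, so isotropic
subspaces of `W` have dimension at most `n - 1`. An abelian `ε` of dimension `n` lies in
`φ⁻¹(φ ε)`, of dimension `dim φ(ε) + 1`, which forces `dim φ(ε) = n - 1`. Conversely `φ⁻¹(L')`
is abelian of dimension `n` for Lagrangian `L'`, and contains every `n`-dimensional `ε` with
`φ(ε) = L'`, hence equals it. Since the `p`-power map vanishes, abelian subalgebras are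
elementary.
-/open Module (finrank)

theorem Submodule.finrank_comap_mkQ {K V : Type*} [DivisionRing K] [AddCommGroup V] [Module K V]
    [FiniteDimensional K V] (Z : Submodule K V) (U : Submodule K (V ⧸ Z)) :
    finrank K (U.comap Z.mkQ) = finrank K U + finrank K Z := by
  have h := LinearMap.finrank_range_add_finrank_ker (U.mkQ ∘ₗ Z.mkQ)
  rw [LinearMap.range_comp_of_range_eq_top _ Z.range_mkQ, U.range_mkQ, finrank_top,
    LinearMap.ker_comp, U.ker_mkQ] at h
  have hU := U.finrank_quotient_add_finrank
  have hZ := Z.finrank_quotient_add_finrank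
  omega

theorem LinearMap.BilinForm.two_mul_finrank_le_of_isotropic {K V : Type*} [Field K]
    [AddCommGroup V] [Module K V] [FiniteDimensional K V] {B : LinearMap.BilinForm K V}
    (hB : B.Nondegenerate) {U : Submodule K V} (hU : ∀ v ∈ U, ∀ w ∈ U, B v w = 0) :
    2 * finrank K U ≤ finrank K V := by
  have hle : U ≤ B.orthogonal U := fun w hw ↦
    (B.mem_orthogonal_iff).2 fun v hv ↦ hU v hv w hw
  have h := Submodule.finrank_mono hle
  rw [B.finrank_orthogonal hB] at h
  have := U.finrank_le
  omega

theorem Submodule.eq_comap_of_map_eq_of_finrank_eq {K V W : Type*} [DivisionRing K]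
    [AddCommGroup V] [Module K V] [AddCommGroup W] [Module K W] [FiniteDimensional K V]
    {f : V →ₗ[K] W} {q : Submodule K V} {U : Submodule K W} (hq : q.map f = U)
    (h : finrank K q = finrank K (U.comap f)) : q = U.comap f :=
  Submodule.eq_of_le_of_finrank_eq (hq ▸ q.le_comap_map f) h

def LieSubalgebra.ofLieEqZero {k L : Type*} [CommRing k] [LieRing L] [LieAlgebra k L]
    (U : Submodule k L) (hU : ∀ x ∈ U, ∀ y ∈ U, ⁅x, y⁆ = 0) : LieSubalgebra k L where
  toSubmodule := U
  lie_mem' {x y} hx hy := by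
    rw [hU x hx y hy]
    exact U.zero_mem

namespace Heisenberg

variable {k L : Type*} [Field k] [LieRing L] [LieAlgebra k L] {yn : L}
  {B : (L ⧸ (LieAlgebra.center k L).toSubmodule) →ₗ[k]
    (L ⧸ (LieAlgebra.center k L).toSubmodule) →ₗ[k] k}

local notation "𝔷" => LieSubmodule.toSubmodule (LieAlgebra.center k L)
local notation "φ" => Submodule.mkQ 𝔷

theorem generator_ne_zero [Nontrivial L] (hyn : 𝔷 = Submodule.span k {yn})
    (hB : ∀ x y : L, ⁅x, y⁆ = B (φ x) (φ y) • yn) : yn ≠ 0 := by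
  rintro rfl
  have htop : 𝔷 = ⊤ := by
    ext x
    simp [LieModule.mem_maxTrivSubmodule, hB]
  rw [Submodule.span_zero_singleton] at hyn
  exact bot_ne_top (hyn.symm.trans htop)

theorem lie_eq_zero_iff (hB : ∀ x y : L, ⁅x, y⁆ = B (φ x) (φ y) • yn) (hyn0 : yn ≠ 0)
    {x y : L} : ⁅x, y⁆ = 0 ↔ B (φ x) (φ y) = 0 := by
  rw [hB, smul_eq_zero, or_iff_left hyn0]

theorem isAlt (hB : ∀ x y : L, ⁅x, y⁆ = B (φ x) (φ y) • yn) (hyn0 : yn ≠ 0) :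
    B.IsAlt := by
  intro v
  obtain ⟨x, rfl⟩ := Submodule.mkQ_surjective 𝔷 v
  exact (lie_eq_zero_iff hB hyn0).1 (lie_self x)

theorem nondegenerate (hB : ∀ x y : L, ⁅x, y⁆ = B (φ x) (φ y) • yn) (hyn0 : yn ≠ 0) :
    B.Nondegenerate := by
  rw [(isAlt hB hyn0).isRefl.nondegenerate_iff_separatingLeft]
  intro v hv
  obtain ⟨x, rfl⟩ := Submodule.mkQ_surjective 𝔷 v
  refine (Submodule.Quotient.mk_eq_zero 𝔷).2 ((LieModule.mem_maxTrivSubmodule k L L x).2 ?_)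
  intro y
  rw [← lie_skew, neg_eq_zero, lie_eq_zero_iff hB hyn0]
  exact hv _

theorem finrank_center (hyn : 𝔷 = Submodule.span k {yn}) (hyn0 : yn ≠ 0) :
    finrank k 𝔷 = 1 := by
  rw [hyn]
  exact finrank_span_singleton hyn0

theorem finrank_comap [FiniteDimensional k L] (hyn : 𝔷 = Submodule.span k {yn}) (hyn0 : yn ≠ 0)
    (U : Submodule k (L ⧸ 𝔷)) : finrank k (U.comap φ) = finrank k U + 1 := by
  rw [Submodule.finrank_comap_mkQ, finrank_center hyn hyn0]

theorem two_mul_finrank_add_one_le [FiniteDimensional k L] (hyn : 𝔷 = Submodule.span k {yn})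
    (hB : ∀ x y : L, ⁅x, y⁆ = B (φ x) (φ y) • yn) (hyn0 : yn ≠ 0) {U : Submodule k (L ⧸ 𝔷)}
    (hU : ∀ v ∈ U, ∀ w ∈ U, B v w = 0) : 2 * finrank k U + 1 ≤ finrank k L := by
  have hW := (𝔷).finrank_quotient_add_finrank
  have hU' :=
    LinearMap.BilinForm.two_mul_finrank_le_of_isotropic (nondegenerate hB hyn0) hU
  rw [finrank_center hyn hyn0] at hW
  omega

theorem map_isotropic (hB : ∀ x y : L, ⁅x, y⁆ = B (φ x) (φ y) • yn) (hyn0 : yn ≠ 0)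
    {ε : Submodule k L} (hε : ∀ x ∈ ε, ∀ y ∈ ε, ⁅x, y⁆ = 0) :
    ∀ v ∈ ε.map φ, ∀ w ∈ ε.map φ, B v w = 0 := by
  rintro _ ⟨x, hx, rfl⟩ _ ⟨y, hy, rfl⟩
  exact (lie_eq_zero_iff hB hyn0).1 (hε x hx y hy)

theorem lie_eq_zero_of_mem_comap (hB : ∀ x y : L, ⁅x, y⁆ = B (φ x) (φ y) • yn)
    {U : Submodule k (L ⧸ 𝔷)} (hU : ∀ v ∈ U, ∀ w ∈ U, B v w = 0) :
    ∀ x ∈ U.comap φ, ∀ y ∈ U.comap φ, ⁅x, y⁆ = 0 := by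
  intro x hx y hy
  rw [hB, hU _ hx _ hy, zero_smul]

end Heisenberg

open Heisenberg

theorem stmt_1_general {k : Type*} [Field k]
    {L : Type*} [LieRing L] [LieAlgebra k L] [Module.Finite k L]
    (pOp : L → L) (hpOp : ∀ x : L, pOp x = 0)
    (n : ℕ) (hn : 1 ≤ n) (hdim : Module.finrank k L = 2 * n - 1)
    (yn : L) (hyn : (LieAlgebra.center k L).toSubmodule = Submodule.span k {yn})
    -- the symplectic form on W = L / z induced by the bracket:
    (B : (L ⧸ (LieAlgebra.center k L).toSubmodule) →ₗ[k]
         (L ⧸ (LieAlgebra.center k L).toSubmodule) →ₗ[k] k)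
    (hB : ∀ x y : L,
      ⁅x, y⁆ = B ((LieAlgebra.center k L).toSubmodule.mkQ x)
                 ((LieAlgebra.center k L).toSubmodule.mkQ y) • yn) :
    -- (i) the image of an elementary subalgebra of dimension n is Lagrangian:
    (∀ ε : LieSubalgebra k L,
       (∀ x ∈ ε, ∀ y ∈ ε, ⁅x, y⁆ = 0) → (∀ x ∈ ε, pOp x = 0) →
       Module.finrank k ε = n →
       (∀ v ∈ Submodule.map (LieAlgebra.center k L).toSubmodule.mkQ ε.toSubmodule,
          ∀ w ∈ Submodule.map (LieAlgebra.center k L).toSubmodule.mkQ ε.toSubmodule,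
          B v w = 0) ∧
       Module.finrank k
         (Submodule.map (LieAlgebra.center k L).toSubmodule.mkQ ε.toSubmodule) = n - 1)
    ∧
    -- (ii) every Lagrangian subspace arises from a unique elementary subalgebra
    -- of dimension n, namely the preimage φ⁻¹(L'):
    (∀ L' : Submodule k (L ⧸ (LieAlgebra.center k L).toSubmodule),
       (∀ v ∈ L', ∀ w ∈ L', B v w = 0) → Module.finrank k L' = n - 1 →
       (∃! ε : LieSubalgebra k L,
          (∀ x ∈ ε, ∀ y ∈ ε, ⁅x, y⁆ = 0) ∧ (∀ x ∈ ε, pOp x = 0) ∧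
          Module.finrank k ε = n ∧
          Submodule.map (LieAlgebra.center k L).toSubmodule.mkQ ε.toSubmodule = L') ∧
       (∃ ε : LieSubalgebra k L,
          (∀ x ∈ ε, ∀ y ∈ ε, ⁅x, y⁆ = 0) ∧ (∀ x ∈ ε, pOp x = 0) ∧
          Module.finrank k ε = n ∧
          ε.toSubmodule = Submodule.comap (LieAlgebra.center k L).toSubmodule.mkQ L')) := by
  have : Nontrivial L := Module.nontrivial_of_finrank_pos (R := k) (by omega)
  have hyn0 : yn ≠ 0 := generator_ne_zero hyn hB
  refine ⟨fun ε hε _ hεn ↦ ⟨map_isotropic hB hyn0 hε, ?_⟩, fun L' hL' hL'n ↦ ?_⟩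
  · have hle := Submodule.finrank_mono
      (ε.toSubmodule.le_comap_map (LieAlgebra.center k L).toSubmodule.mkQ)
    rw [finrank_comap hyn hyn0] at hle
    have := two_mul_finrank_add_one_le hyn hB hyn0 (map_isotropic hB hyn0 hε)
    change finrank k ε.toSubmodule = n at hεn
    omega
  have hcomm := lie_eq_zero_of_mem_comap hB hL'
  have hfin : finrank k (L'.comap (LieAlgebra.center k L).toSubmodule.mkQ) = n := by
    rw [finrank_comap hyn hyn0]
    omega
  have hmap := L'.map_comap_eq_of_surjective (Submodule.mkQ_surjective _)
  refine ⟨⟨.ofLieEqZero _ hcomm, ⟨hcomm, fun x _ ↦ hpOp x, hfin, hmap⟩, ?_⟩,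
    ⟨.ofLieEqZero _ hcomm, hcomm, fun x _ ↦ hpOp x, hfin, rfl⟩⟩
  rintro ε ⟨-, -, hεn, hεL'⟩
  exact LieSubalgebra.toSubmodule_injective
    (Submodule.eq_comap_of_map_eq_of_finrank_eq hεL' (hεn.trans hfin.symm))

/-- For a Heisenberg restricted Lie algebra `L` of dimension `2n-1`
(center `z` spanned by `yn`, vanishing `p`-power operation) over an algebraically
closed field of characteristic `p > 2`, with `W = L/z` carrying the induced
symplectic form `B` (so that `⁅x,y⁆ = B x̄ ȳ • yn`), the map `ε ↦ φ(ε)` is a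
bijection between elementary subalgebras of dimension `n` and Lagrangian
(isotropic of dimension `n-1`) subspaces of `W`; in particular `φ⁻¹(L')` is an
elementary subalgebra of dimension `n` for every Lagrangian `L' ⊆ W`. -/
theorem stmt_1 {k : Type*} [Field k] [IsAlgClosed k] {p : ℕ} [Fact p.Prime] [CharP k p]
    (hp : 2 < p)
    {L : Type*} [LieRing L] [LieAlgebra k L] [Module.Finite k L]
    (pOp : L → L) (hpOp : ∀ x : L, pOp x = 0)
    (n : ℕ) (hn : 1 ≤ n) (hdim : Module.finrank k L = 2 * n - 1)
    (yn : L) (hyn : (LieAlgebra.center k L).toSubmodule = Submodule.span k {yn})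
    -- the symplectic form on W = L / z induced by the bracket:
    (B : (L ⧸ (LieAlgebra.center k L).toSubmodule) →ₗ[k]
         (L ⧸ (LieAlgebra.center k L).toSubmodule) →ₗ[k] k)
    (hB : ∀ x y : L,
      ⁅x, y⁆ = B ((LieAlgebra.center k L).toSubmodule.mkQ x)
                 ((LieAlgebra.center k L).toSubmodule.mkQ y) • yn) :
    -- (i) the image of an elementary subalgebra of dimension n is Lagrangian:
    (∀ ε : LieSubalgebra k L,
       (∀ x ∈ ε, ∀ y ∈ ε, ⁅x, y⁆ = 0) → (∀ x ∈ ε, pOp x = 0) →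
       Module.finrank k ε = n →
       (∀ v ∈ Submodule.map (LieAlgebra.center k L).toSubmodule.mkQ ε.toSubmodule,
          ∀ w ∈ Submodule.map (LieAlgebra.center k L).toSubmodule.mkQ ε.toSubmodule,
          B v w = 0) ∧
       Module.finrank k
         (Submodule.map (LieAlgebra.center k L).toSubmodule.mkQ ε.toSubmodule) = n - 1)
    ∧
    -- (ii) every Lagrangian subspace arises from a unique elementary subalgebra
    -- of dimension n, namely the preimage φ⁻¹(L'):
    (∀ L' : Submodule k (L ⧸ (LieAlgebra.center k L).toSubmodule),
       (∀ v ∈ L', ∀ w ∈ L', B v w = 0) → Module.finrank k L' = n - 1 →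
       (∃! ε : LieSubalgebra k L,
          (∀ x ∈ ε, ∀ y ∈ ε, ⁅x, y⁆ = 0) ∧ (∀ x ∈ ε, pOp x = 0) ∧
          Module.finrank k ε = n ∧
          Submodule.map (LieAlgebra.center k L).toSubmodule.mkQ ε.toSubmodule = L') ∧
       (∃ ε : LieSubalgebra k L,
          (∀ x ∈ ε, ∀ y ∈ ε, ⁅x, y⁆ = 0) ∧ (∀ x ∈ ε, pOp x = 0) ∧
          Module.finrank k ε = n ∧
          ε.toSubmodule = Submodule.comap (LieAlgebra.center k L).toSubmodule.mkQ L')) :=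
  stmt_1_general pOp hpOp n hn hdim yn hyn B hB
end

section
/- Let k be an algebraically closed field of characteristic p > 2 and m ≥ 1. Let u_{m,m} ⊂ sl_{2m}(k) be the set of block matrices of the form [[0, A],[0, 0]] with A an m×m matrix. Then u_{m,m} is an elementary subalgebra of sl_{2m}(k) of dimension m², and every elementary subalgebra of sl_{2m}(k) of dimension m² contained in the strictly upper triangular matrices equals u_{m,m}. -/
attribute [local instance 100] LieRing.ofAssociativeRing

/-- The set `u_{m,m}` of block matrices `[[0, A],[0, 0]]` inside `2m × 2m` matrices. -/
def blockSet (k : Type*) [Field k] (m : ℕ) : Set (Matrix (Fin (2 * m)) (Fin (2 * m)) k) :=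
  {X | ∀ i j : Fin (2 * m), ¬((i : ℕ) < m ∧ m ≤ (j : ℕ)) → X i j = 0}

/-!
Induction on the window `[l, l + 2t)` of indices carrying a commutative subspace `a` of strictly
upper triangular matrices (Mirzakhani's argument). The map `X ↦ (row l of X, column l + 2t - 1
of X)` has as kernel on `a` a commutative subspace of the inner window `[l + 1, l + 2t - 1)`.
Its image has dimension at most `2t - 1`: if the row of `X` vanishes then, for every `Y ∈ a`,
`(row l of Y) ⬝ᵥ (column of X) = (YX)_{l, l+2t-1} = (XY)_{l, l+2t-1} = 0`, so the rows and these
columns are orthogonal subspaces of a `(2t - 1)`-dimensional coordinate space. Hence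
`dim a ≤ t²`. In case of equality the kernel is the inner corner block, and commuting with its
elementary matrices kills every entry of `a` outside the corner block `[[0, A], [0, 0]]`.
-/

section CommutingSubspaces

open Module Matrix

variable {k : Type*} [Field k] {N : ℕ}

theorem Submodule.finrank_map_add_finrank_inf_ker {V V' : Type*} [AddCommGroup V] [Module k V]
    [FiniteDimensional k V] [AddCommGroup V'] [Module k V'] (f : V →ₗ[k] V') (p : Submodule k V) :
    finrank k (p.map f) + finrank k ↥(p ⊓ LinearMap.ker f) = finrank k p := by
  rw [← LinearMap.finrank_range_add_finrank_ker (f.domRestrict p), LinearMap.range_domRestrict,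
    LinearMap.ker_domRestrict, ← Submodule.finrank_map_subtype_eq, Submodule.map_comap_subtype]

section DotProduct

variable {ι : Type*} [Fintype ι]

theorem finrank_add_finrank_le_of_dotProduct_eq_zero [DecidableEq ι] {W U : Submodule k (ι → k)}
    (h : ∀ w ∈ W, ∀ u ∈ U, w ⬝ᵥ u = 0) :
    finrank k W + finrank k U ≤ Fintype.card ι := by
  have hU : U.map (dotProductEquiv k ι).toLinearMap ≤ W.dualAnnihilator := by
    rintro _ ⟨u, hu, rfl⟩
    rw [Submodule.mem_dualAnnihilator]
    intro w hw
    simpa [dotProduct_comm] using h w hw u hu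
  have hW := Subspace.finrank_add_finrank_dualAnnihilator_eq W
  have hU' := Submodule.finrank_mono hU
  rw [Module.finrank_fintype_fun_eq_card] at hW
  rw [LinearEquiv.finrank_map_eq] at hU'
  omega

theorem finrank_add_finrank_le_card_of_dotProduct_eq_zero (s : Finset ι)
    {W U : Submodule k (ι → k)} (hW : ∀ w ∈ W, ∀ i ∉ s, w i = 0) (hU : ∀ u ∈ U, ∀ i ∉ s, u i = 0)
    (h : ∀ w ∈ W, ∀ u ∈ U, w ⬝ᵥ u = 0) :
    finrank k W + finrank k U ≤ s.card := by
  classical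
  set restrict := LinearMap.funLeft k k ((↑) : s → ι)
  have hdot : ∀ v w : ι → k, (∀ i ∉ s, v i = 0) → restrict v ⬝ᵥ restrict w = v ⬝ᵥ w := by
    intro v w hv
    simp only [dotProduct, restrict, LinearMap.funLeft_apply]
    rw [Finset.sum_coe_sort s (fun i => v i * w i)]
    exact Finset.sum_subset (Finset.subset_univ s) fun i _ hi => by simp [hv i hi]
  have hinj : ∀ p : Submodule k (ι → k), (∀ v ∈ p, ∀ i ∉ s, v i = 0) →
      finrank k (p.map restrict) = finrank k p := by
    intro p hp
    have hker : p ⊓ LinearMap.ker restrict = ⊥ := by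
      refine (Submodule.eq_bot_iff _).2 fun v ⟨hvp, hv⟩ => funext fun i => ?_
      by_cases hi : i ∈ s
      · exact congrFun (LinearMap.mem_ker.1 hv) ⟨i, hi⟩
      · exact hp v hvp i hi
    have := Submodule.finrank_map_add_finrank_inf_ker restrict p
    rwa [hker, finrank_bot, add_zero] at this
  have := finrank_add_finrank_le_of_dotProduct_eq_zero (W := W.map restrict) (U := U.map restrict)
    (by
      rintro _ ⟨w, hw, rfl⟩ _ ⟨u, hu, rfl⟩
      rw [hdot w u (hW w hw)]
      exact h w hw u hu)
  rwa [hinj W hW, hinj U hU, Fintype.card_coe] at this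

theorem finrank_le_card_of_fst_dotProduct_snd_eq_zero (s : Finset ι)
    (L : Submodule k ((ι → k) × (ι → k))) (hfst : ∀ z ∈ L, ∀ i ∉ s, z.1 i = 0)
    (hsnd : ∀ z ∈ L, z.1 = 0 → ∀ i ∉ s, z.2 i = 0)
    (horth : ∀ z ∈ L, z.1 = 0 → ∀ z' ∈ L, z'.1 ⬝ᵥ z.2 = 0) :
    finrank k L ≤ s.card := by
  have hL := Submodule.finrank_map_add_finrank_inf_ker (LinearMap.fst k (ι → k) (ι → k)) L
  set K := L ⊓ LinearMap.ker (LinearMap.fst k (ι → k) (ι → k))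
  have hK := Submodule.finrank_map_add_finrank_inf_ker (LinearMap.snd k (ι → k) (ι → k)) K
  have hKsnd : K ⊓ LinearMap.ker (LinearMap.snd k (ι → k) (ι → k)) = ⊥ := by
    refine (Submodule.eq_bot_iff _).2 fun z ⟨⟨_, h1⟩, h2⟩ => Prod.ext h1 h2
  rw [hKsnd, finrank_bot, add_zero] at hK
  have := finrank_add_finrank_le_card_of_dotProduct_eq_zero s
    (W := L.map (LinearMap.fst k (ι → k) (ι → k))) (U := K.map (LinearMap.snd k (ι → k) (ι → k)))
    (by rintro _ ⟨z, hz, rfl⟩; exact hfst z hz)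
    (by rintro _ ⟨z, ⟨hz, hz1⟩, rfl⟩; exact hsnd z hz hz1)
    (by rintro _ ⟨z', hz', rfl⟩ _ ⟨z, ⟨hz, hz1⟩, rfl⟩; exact horth z hz hz1 z' hz')
  omega

end DotProduct

section Supported

variable {R : Type*} [Semiring R]

theorem Matrix.apply_eq_zero_of_commute_single_of_ne_left {n : Type*} [Fintype n] [DecidableEq n]
    {X : Matrix n n R} {α β i : n} (h : Commute X (single α β 1)) (hi : i ≠ α) :
    X i α = 0 := by
  simpa [hi] using congrFun (congrFun h.eq i) β

theorem Matrix.apply_eq_zero_of_commute_single_of_ne_right {n : Type*} [Fintype n] [DecidableEq n]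
    {X : Matrix n n R} {α β j : n} (h : Commute X (single α β 1)) (hj : j ≠ β) :
    X β j = 0 := by
  simpa [hj] using (congrFun (congrFun h.eq α) j).symm

def supportedOn (R : Type*) [Semiring R] {n : Type*} (S : n → n → Prop) :
    Submodule R (Matrix n n R) where
  carrier := {X | ∀ i j, ¬ S i j → X i j = 0}
  add_mem' hX hY i j h := by simp [hX i j h, hY i j h]
  zero_mem' _ _ _ := rfl
  smul_mem' c X hX i j h := by simp [hX i j h]

theorem of_apply_ne_zero_of_mem_supportedOn {n : Type*} {S : n → n → Prop} {X : Matrix n n R}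
    (hX : X ∈ supportedOn R S) {i j : n} (h : X i j ≠ 0) : S i j :=
  not_not.1 (mt (hX i j) h)

theorem single_mem_supportedOn {n : Type*} [DecidableEq n] {S : n → n → Prop} {i j : n}
    (h : S i j) (c : R) : single i j c ∈ supportedOn R S := by
  rintro _ _ hS
  rw [single_apply_of_ne]
  rintro ⟨rfl, rfl⟩
  exact hS h

def strictUpperWindow (R : Type*) [Semiring R] (N l r : ℕ) :
    Submodule R (Matrix (Fin N) (Fin N) R) :=
  supportedOn R fun i j => l ≤ (i : ℕ) ∧ i < j ∧ (j : ℕ) < r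

def cornerBlock (R : Type*) [Semiring R] (N l t : ℕ) : Submodule R (Matrix (Fin N) (Fin N) R) :=
  supportedOn R fun i j => l ≤ (i : ℕ) ∧ (i : ℕ) < l + t ∧ l + t ≤ (j : ℕ) ∧ (j : ℕ) < l + 2 * t

def rowCol {n : Type*} (i j : n) : Matrix n n R →ₗ[R] (n → R) × (n → R) where
  toFun X := (X i, fun a => X a j)
  map_add' _ _ := rfl
  map_smul' _ _ := rfl

theorem cornerBlock_le_strictUpperWindow (l t : ℕ) :
    cornerBlock R N l t ≤ strictUpperWindow R N l (l + 2 * t) := fun X hX i j hij =>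
  hX i j fun h => hij ⟨h.1, by rw [Fin.lt_def]; omega, h.2.2.2⟩

theorem mul_eq_zero_of_mem_cornerBlock {l t : ℕ} {X Y : Matrix (Fin N) (Fin N) R}
    (hX : X ∈ cornerBlock R N l t) (hY : Y ∈ cornerBlock R N l t) : X * Y = 0 := by
  ext i j
  refine (mul_apply (M := X)).trans <| Finset.sum_eq_zero fun c _ => ?_
  by_cases hc : l + t ≤ (c : ℕ)
  · rw [hY c j (by omega), mul_zero]
  · rw [hX i c (by omega), zero_mul]

theorem trace_eq_zero_of_mem_strictUpperWindow {l r : ℕ} {X : Matrix (Fin N) (Fin N) R}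
    (hX : X ∈ strictUpperWindow R N l r) : trace X = 0 :=
  Finset.sum_eq_zero fun i _ => hX i i fun h => lt_irrefl i h.2.1

theorem mem_strictUpperWindow_of_rowCol_eq_zero {l r : ℕ} {i₀ j₀ : Fin N} (hi₀ : (i₀ : ℕ) = l)
    (hj₀ : (j₀ : ℕ) + 1 = r) {X : Matrix (Fin N) (Fin N) R} (hX : X ∈ strictUpperWindow R N l r)
    (h : rowCol i₀ j₀ X = 0) : X ∈ strictUpperWindow R N (l + 1) j₀ := by
  intro i j hij
  by_contra hne
  have hwin : l ≤ (i : ℕ) ∧ (i : ℕ) < j ∧ (j : ℕ) < r :=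
    of_apply_ne_zero_of_mem_supportedOn hX hne
  replace hij : ¬(l + 1 ≤ (i : ℕ) ∧ (i : ℕ) < j ∧ (j : ℕ) < j₀) := hij
  by_cases hi : (i : ℕ) = l
  · exact hne (by rw [Fin.ext (hi.trans hi₀.symm)]; exact congrFun (congrArg Prod.fst h) j)
  · have hj : j = j₀ := Fin.ext (by omega)
    exact hne (by rw [hj]; exact congrFun (congrArg Prod.snd h) i)

def cornerBlockLieSubalgebra (R : Type*) [CommRing R] (N l t : ℕ) :
    LieSubalgebra R (Matrix (Fin N) (Fin N) R) :=
  { cornerBlock R N l t with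
    lie_mem' := fun hX hY => by
      rw [Ring.lie_def, mul_eq_zero_of_mem_cornerBlock hX hY,
        mul_eq_zero_of_mem_cornerBlock hY hX, sub_zero]
      exact (cornerBlock R N l t).zero_mem }

end Supported

theorem exists_finrank_le_add_of_le_strictUpperWindow {l t : ℕ} (hN : l + 2 * (t + 1) ≤ N)
    {a : Submodule k (Matrix (Fin N) (Fin N) k)}
    (ha : a ≤ strictUpperWindow k N l (l + 2 * (t + 1)))
    (hC : ∀ X ∈ a, ∀ Y ∈ a, Commute X Y) :
    ∃ b ≤ a, b ≤ strictUpperWindow k N (l + 1) (l + 1 + 2 * t) ∧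
      finrank k a ≤ finrank k b + (2 * t + 1) := by
  set lf : Fin N := ⟨l, by omega⟩
  set rf : Fin N := ⟨l + 1 + 2 * t, by omega⟩
  have hwin : ∀ X ∈ a, ∀ {i j : Fin N}, X i j ≠ 0 → l ≤ (i : ℕ) ∧ i < j ∧ (j : ℕ) ≤ l + 2 * t + 1 :=
    fun X hX i j h => by
      have := of_apply_ne_zero_of_mem_supportedOn (ha hX) h
      omega
  refine ⟨a ⊓ LinearMap.ker (rowCol lf rf), inf_le_left, fun X hX =>
    mem_strictUpperWindow_of_rowCol_eq_zero rfl (by simp [rf]; omega) (ha hX.1) hX.2, ?_⟩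
  have hsplit := Submodule.finrank_map_add_finrank_inf_ker (rowCol lf rf) a
  have hcard : (Finset.Ioc lf rf).card = 2 * t + 1 := by simp [lf, rf]; omega
  have hrows : ∀ z ∈ a.map (rowCol lf rf), ∀ i ∉ Finset.Ioc lf rf, z.1 i = 0 := by
    rintro _ ⟨X, hX, rfl⟩ i hi
    by_contra hne
    have := hwin X hX hne
    simp [Finset.mem_Ioc, Fin.lt_def, Fin.le_def, lf, rf] at hi
    omega
  have hcols : ∀ z ∈ a.map (rowCol lf rf), z.1 = 0 → ∀ i ∉ Finset.Ioc lf rf, z.2 i = 0 := by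
    rintro _ ⟨X, hX, rfl⟩ hrow i hi
    by_contra hne
    change X lf = 0 at hrow
    change X i rf ≠ 0 at hne
    have hil : i ≠ lf := fun h => hne (by rw [h, hrow]; rfl)
    have := hwin X hX hne
    simp [Finset.mem_Ioc, Fin.lt_def, Fin.le_def, Fin.ext_iff, lf, rf] at hi hil this
    omega
  have horth : ∀ z ∈ a.map (rowCol lf rf), z.1 = 0 → ∀ z' ∈ a.map (rowCol lf rf),
      z'.1 ⬝ᵥ z.2 = 0 := by
    rintro _ ⟨X, hX, rfl⟩ hrow _ ⟨Y, hY, rfl⟩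
    change X lf = 0 at hrow
    change Y lf ⬝ᵥ (fun i => X i rf) = 0
    rw [← mul_apply', (hC Y hY X hX).eq, mul_apply', hrow, zero_dotProduct]
  have := finrank_le_card_of_fst_dotProduct_snd_eq_zero _ _ hrows hcols horth
  omega

theorem finrank_le_sq_of_le_strictUpperWindow (t : ℕ) {l : ℕ} (hN : l + 2 * t ≤ N)
    {a : Submodule k (Matrix (Fin N) (Fin N) k)} (ha : a ≤ strictUpperWindow k N l (l + 2 * t))
    (hC : ∀ X ∈ a, ∀ Y ∈ a, Commute X Y) :
    finrank k a ≤ t ^ 2 := by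
  induction t generalizing l a with
  | zero =>
    have : a = ⊥ := (Submodule.eq_bot_iff a).2 fun X hX => by
      ext i j
      exact ha hX i j (by omega)
    simp [this]
  | succ t ih =>
    obtain ⟨b, hba, hb, hab⟩ := exists_finrank_le_add_of_le_strictUpperWindow hN ha hC
    have := ih (by omega) hb fun X hX Y hY => hC X (hba hX) Y (hba hY)
    nlinarith

theorem finrank_cornerBlock {l t : ℕ} (hN : l + 2 * t ≤ N) :
    finrank k (cornerBlock k N l t) = t ^ 2 := by
  refine le_antisymm (finrank_le_sq_of_le_strictUpperWindow t hN
    (cornerBlock_le_strictUpperWindow l t) fun X hX Y hY => ?_) ?_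
  · rw [Commute, SemiconjBy, mul_eq_zero_of_mem_cornerBlock hX hY,
      mul_eq_zero_of_mem_cornerBlock hY hX]
  · let e : Fin t × Fin t → Fin N × Fin N := fun c => (⟨l + c.1, by omega⟩, ⟨l + t + c.2, by omega⟩)
    have he : Function.Injective e := fun c c' h => by
      simp only [e, Prod.ext_iff, Fin.ext_iff] at h
      ext <;> omega
    have hli := (stdBasis k (Fin N) (Fin N)).linearIndependent.comp e he
    have hspan : Submodule.span k (Set.range ((stdBasis k (Fin N) (Fin N)) ∘ e)) ≤
        cornerBlock k N l t := by
      rw [Submodule.span_le]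
      rintro _ ⟨c, rfl⟩
      simp only [Function.comp_apply, e, stdBasis_eq_single]
      exact single_mem_supportedOn (by simp; omega) 1
    have := Submodule.finrank_mono hspan
    rw [finrank_span_eq_card hli] at this
    simpa [sq] using this

theorem le_cornerBlock_succ {l t : ℕ} (hN : l + 2 * (t + 1) ≤ N)
    {a : Submodule k (Matrix (Fin N) (Fin N) k)}
    (ha : a ≤ strictUpperWindow k N l (l + 2 * (t + 1)))
    (hC : ∀ X ∈ a, ∀ Y ∈ a, Commute X Y) (hb : cornerBlock k N (l + 1) t ≤ a) :
    a ≤ cornerBlock k N l (t + 1) := by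
  intro X hX i j hij
  by_contra hne
  have hwin := of_apply_ne_zero_of_mem_supportedOn (ha hX) hne
  rw [Fin.lt_def] at hwin
  by_cases hi : l + t + 1 ≤ (i : ℕ)
  · have hs : single ⟨l + 1, by omega⟩ i (1 : k) ∈ a :=
      hb (single_mem_supportedOn (by simp; omega) 1)
    exact hne (apply_eq_zero_of_commute_single_of_ne_right (hC X hX _ hs)
      (fun h => by rw [h] at hwin; omega))
  · have hs : single j ⟨l + t + 1, by omega⟩ (1 : k) ∈ a :=
      hb (single_mem_supportedOn (by simp; omega) 1)
    exact hne (apply_eq_zero_of_commute_single_of_ne_left (hC X hX _ hs)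
      (fun h => by rw [h] at hwin; omega))

theorem eq_cornerBlock_of_finrank_eq (t : ℕ) {l : ℕ} (hN : l + 2 * t ≤ N)
    {a : Submodule k (Matrix (Fin N) (Fin N) k)} (ha : a ≤ strictUpperWindow k N l (l + 2 * t))
    (hC : ∀ X ∈ a, ∀ Y ∈ a, Commute X Y) (hfin : finrank k a = t ^ 2) :
    a = cornerBlock k N l t := by
  suffices h : a ≤ cornerBlock k N l t from
    Submodule.eq_of_le_of_finrank_eq h (by rw [hfin, finrank_cornerBlock hN])
  induction t generalizing l a with
  | zero => exact fun X hX i j _ => ha hX i j (by omega)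
  | succ t ih =>
    obtain ⟨b, hba, hb, hab⟩ := exists_finrank_le_add_of_le_strictUpperWindow hN ha hC
    have hbC : ∀ X ∈ b, ∀ Y ∈ b, Commute X Y := fun X hX Y hY => hC X (hba hX) Y (hba hY)
    have hble := finrank_le_sq_of_le_strictUpperWindow t (by omega) hb hbC
    have hbeq : b = cornerBlock k N (l + 1) t :=
      Submodule.eq_of_le_of_finrank_eq (ih (by omega) hb hbC (by nlinarith))
        (by rw [finrank_cornerBlock (by omega)]; nlinarith)
    exact le_cornerBlock_succ hN ha hC (hbeq ▸ hba)

theorem coe_cornerBlock_eq_blockSet (m : ℕ) :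
    (cornerBlock k (2 * m) 0 m : Set (Matrix (Fin (2 * m)) (Fin (2 * m)) k)) = blockSet k m := by
  ext X
  refine forall₂_congr fun i j => imp_congr_left (not_congr ?_)
  have := j.isLt
  omega

end CommutingSubspaces

theorem stmt_3_general {k : Type*} [Field k] {p : ℕ} [Fact p.Prime] (m : ℕ) :
    (∃ ε : LieSubalgebra k (Matrix (Fin (2 * m)) (Fin (2 * m)) k),
       (ε : Set (Matrix (Fin (2 * m)) (Fin (2 * m)) k)) = blockSet k m ∧
       ε ≤ LieAlgebra.SpecialLinear.sl (Fin (2 * m)) k ∧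
       (∀ x ∈ ε, ∀ y ∈ ε, ⁅x, y⁆ = 0) ∧
       (∀ x ∈ ε, x ^ p = 0) ∧
       Module.finrank k ε = m ^ 2)
    ∧
    (∀ ε : LieSubalgebra k (Matrix (Fin (2 * m)) (Fin (2 * m)) k),
       ε ≤ LieAlgebra.SpecialLinear.sl (Fin (2 * m)) k →
       (∀ x ∈ ε, ∀ y ∈ ε, ⁅x, y⁆ = 0) →
       (∀ x ∈ ε, x ^ p = 0) →
       (∀ x ∈ ε, ∀ i j : Fin (2 * m), (j : ℕ) ≤ (i : ℕ) → x i j = 0) →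
       Module.finrank k ε = m ^ 2 →
       (ε : Set (Matrix (Fin (2 * m)) (Fin (2 * m)) k)) = blockSet k m) := by
  have hN : 0 + 2 * m ≤ 2 * m := by omega
  refine ⟨⟨cornerBlockLieSubalgebra k (2 * m) 0 m, coe_cornerBlock_eq_blockSet m,
    fun X hX => trace_eq_zero_of_mem_strictUpperWindow (cornerBlock_le_strictUpperWindow 0 m hX),
    fun X hX Y hY => ?_, fun X hX => ?_, finrank_cornerBlock hN⟩, ?_⟩
  · rw [Ring.lie_def, mul_eq_zero_of_mem_cornerBlock hX hY, mul_eq_zero_of_mem_cornerBlock hY hX,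
      sub_zero]
  · refine pow_eq_zero_of_le (Fact.out : p.Prime).two_le ?_
    rw [sq, mul_eq_zero_of_mem_cornerBlock hX hX]
  · intro ε _ hlie _ hupper hfin
    have hwin : ε.toSubmodule ≤ strictUpperWindow k (2 * m) 0 (0 + 2 * m) := by
      intro X hX i j h
      exact hupper X hX i j (not_lt.1 fun hij => h ⟨Nat.zero_le _, hij, by omega⟩)
    have hC : ∀ X ∈ ε.toSubmodule, ∀ Y ∈ ε.toSubmodule, Commute X Y := fun X hX Y hY =>
      sub_eq_zero.1 ((Ring.lie_def X Y).symm.trans (hlie X hX Y hY))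
    rw [← coe_cornerBlock_eq_blockSet, ← eq_cornerBlock_of_finrank_eq m hN hwin hC hfin]
    rfl

/-- `u_{m,m}` is an elementary subalgebra of `sl_{2m}(k)` of dimension `m²`,
and every elementary subalgebra of `sl_{2m}(k)` of dimension `m²` consisting of strictly
upper triangular matrices equals `u_{m,m}`. -/
theorem stmt_3 {k : Type*} [Field k] [IsAlgClosed k] {p : ℕ} [Fact p.Prime] [CharP k p]
    (hp : 2 < p) (m : ℕ) (hm : 1 ≤ m) :
    (∃ ε : LieSubalgebra k (Matrix (Fin (2 * m)) (Fin (2 * m)) k),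
       (ε : Set (Matrix (Fin (2 * m)) (Fin (2 * m)) k)) = blockSet k m ∧
       ε ≤ LieAlgebra.SpecialLinear.sl (Fin (2 * m)) k ∧
       (∀ x ∈ ε, ∀ y ∈ ε, ⁅x, y⁆ = 0) ∧
       (∀ x ∈ ε, x ^ p = 0) ∧
       Module.finrank k ε = m ^ 2)
    ∧
    (∀ ε : LieSubalgebra k (Matrix (Fin (2 * m)) (Fin (2 * m)) k),
       ε ≤ LieAlgebra.SpecialLinear.sl (Fin (2 * m)) k →
       (∀ x ∈ ε, ∀ y ∈ ε, ⁅x, y⁆ = 0) →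
       (∀ x ∈ ε, x ^ p = 0) →
       (∀ x ∈ ε, ∀ i j : Fin (2 * m), (j : ℕ) ≤ (i : ℕ) → x i j = 0) →
       Module.finrank k ε = m ^ 2 →
       (ε : Set (Matrix (Fin (2 * m)) (Fin (2 * m)) k)) = blockSet k m) :=
  stmt_3_general m
end

section
/- Let k be an algebraically closed field of characteristic p ≠ 2 and let ε be a Lie subalgebra of the symplectic Lie algebra sp_{2m}(k) consisting of pairwise commuting p-nilpotent elements. Then there exists a complete isotropic flag 0 ⊂ V_1 ⊂ ⋯ ⊂ V_m ⊂ V_{m-1}^⊥ ⊂ ⋯ ⊂ V_1^⊥ ⊂ V in the standard symplectic space V = k^{2m} that is invariant under ε; consequently ε is conjugate under Sp_{2m}(k) into the nilpotent radical of the standard Borel subalgebra. -/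
open Matrix

attribute [local instance 100] LieRing.ofAssociativeRing

/-- The matrix of the standard symplectic form, `[[0, I],[-I, 0]]`. -/
def Jstd (k : Type*) [Field k] (m : ℕ) :
    Matrix (Fin m ⊕ Fin m) (Fin m ⊕ Fin m) k :=
  Matrix.fromBlocks 0 1 (-1) 0

/-- The `t`-th member of the standard complete isotropic flag in `k^{2m}`:
for `t ≤ m` it is the span of the first `t` standard basis vectors `x_1, …, x_t`;
for `t = m + s` it is `V_{m-s}^⊥`. -/
def stdFlag (k : Type*) [Field k] (m t : ℕ) : Submodule k ((Fin m ⊕ Fin m) → k) :=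
  Submodule.span k
    ((fun i : Fin m => Pi.single (Sum.inl i) (1 : k)) '' {i | (i : ℕ) < t} ∪
     (fun j : Fin m => Pi.single (Sum.inr j) (1 : k)) '' {j | 2 * m ≤ (j : ℕ) + t})

/-!
Let `B` be the standard symplectic form. The elements of `ε` act on `k^{2m}` as pairwise
commuting nilpotent `B`-skew-adjoint endomorphisms. If `W` is an `ε`-stable isotropic subspace of
dimension `< m`, then `W^⊥` is `ε`-stable of dimension `2m - dim W > dim W`; a minimal `ε`-stable
subspace strictly between `W` and `W^⊥` is mapped into `W` by `ε`, and since `B` is alternating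
any of its vectors outside `W` enlarges `W` to an `ε`-stable isotropic subspace. Iterating gives a
basis `e₁, …, e_m` of a Lagrangian with `ε eᵢ ⊆ ⟨e₁, …, e_{i-1}⟩`. Completing it to a symplectic
basis `e, f` gives a symplectic change of basis after which every element of `ε` is strictly upper
triangular on `⟨e⟩`; skew-adjointness makes its `f`-block the negative transpose, so it lowers
the standard flag by one step.
-/

open Module Submodule Set

lemma IsNilpotent.exists_mem_notMem_apply_mem {R M : Type*} [Semiring R] [AddCommMonoid M]
    [Module R M] {f : Module.End R M} (hf : IsNilpotent f) {X W : Submodule R M}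
    (hX : MapsTo f X X) {x : M} (hxX : x ∈ X) (hxW : x ∉ W) :
    ∃ y ∈ X, y ∉ W ∧ f y ∈ W := by
  by_contra! h
  obtain ⟨n, hn⟩ := hf
  have hpow : ∀ j, (f ^ j) x ∈ X ∧ (f ^ j) x ∉ W := by
    intro j
    induction j with
    | zero => exact ⟨hxX, hxW⟩
    | succ j ih =>
      rw [pow_succ', Module.End.mul_apply]
      exact ⟨hX ih.1, h _ ih.1 ih.2⟩
  exact (hpow n).2 (by rw [hn]; exact W.zero_mem)

theorem exists_mem_notMem_forall_apply_mem_of_commute {R M : Type*} [Ring R] [AddCommGroup M]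
    [Module R M] [IsArtinian R M] (S : Set (Module.End R M))
    (hcomm : ∀ f ∈ S, ∀ g ∈ S, Commute f g) (hnil : ∀ f ∈ S, IsNilpotent f)
    {W U : Submodule R M} (hWU : W < U) (hW : ∀ f ∈ S, MapsTo f W W)
    (hU : ∀ f ∈ S, MapsTo f U U) :
    ∃ v ∈ U, v ∉ W ∧ ∀ f ∈ S, f v ∈ W := by
  obtain ⟨X, ⟨hWX, hXU, hXS⟩, hmin⟩ := (wellFounded_lt (α := Submodule R M)).has_min
    {X | W < X ∧ X ≤ U ∧ ∀ f ∈ S, MapsTo f X X} ⟨U, hWU, le_rfl, hU⟩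
  obtain ⟨x, hxX, hxW⟩ := SetLike.exists_of_lt hWX
  refine ⟨x, hXU hxX, hxW, fun f hf => ?_⟩
  -- `X ⊓ f⁻¹ W` is again `S`-stable and strictly above `W`, so by minimality it is all of `X`.
  obtain ⟨y, hyX, hyW, hfy⟩ := (hnil f hf).exists_mem_notMem_apply_mem (hXS f hf) hxX hxW
  have hmem : X ⊓ W.comap f ∈ {X | W < X ∧ X ≤ U ∧ ∀ f ∈ S, MapsTo f X X} := by
    refine ⟨lt_of_le_of_ne (le_inf hWX.le fun w hw => hW f hf hw) fun h => hyW ?_,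
      inf_le_left.trans hXU, fun g hg z hz => ⟨hXS g hg hz.1, ?_⟩⟩
    · exact h ▸ ⟨hyX, hfy⟩
    · change f (g z) ∈ W
      rw [← Module.End.mul_apply, (hcomm f hf g hg).eq, Module.End.mul_apply]
      exact hW g hg hz.2
  have hX : X ⊓ W.comap f = X := eq_of_le_of_not_lt inf_le_left (hmin _ hmem)
  exact (hX.symm ▸ hxX : x ∈ X ⊓ W.comap f).2

lemma Fin.snoc_image_Iio_castSucc {α : Type*} {n : ℕ} (e : Fin n → α) (v : α) (i : Fin n) :
    Fin.snoc (α := fun _ => α) e v '' Iio i.castSucc = e '' Iio i := by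
  rw [← Fin.image_castSucc_Iio, image_image]
  simp only [Fin.snoc_castSucc]

lemma Fin.snoc_image_Iio_last {α : Type*} {n : ℕ} (e : Fin n → α) (v : α) :
    Fin.snoc (α := fun _ => α) e v '' Iio (Fin.last n) = range e := by
  have : Iio (Fin.last n) = range Fin.castSucc := by
    ext i; simp [Fin.range_castSucc, Fin.lt_def]
  rw [this, ← range_comp, Fin.snoc_comp_castSucc]

namespace LinearMap.BilinForm

variable {K V : Type*} [Field K] [AddCommGroup V] [Module K V] {B : LinearMap.BilinForm K V}

lemma span_le_orthogonal_span {s : Set V} (hs : ∀ x ∈ s, ∀ y ∈ s, B x y = 0) :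
    span K s ≤ B.orthogonal (span K s) := by
  refine span_le.2 fun y hy x hx => ?_
  have : span K s ≤ LinearMap.ker (B.flip y) := span_le.2 fun x hx => hs x hx y hy
  exact this hx

lemma mapsTo_orthogonal {f : Module.End K V} (hf : LinearMap.IsSkewAdjoint B f)
    {W : Submodule K V} (hW : MapsTo f W W) : MapsTo f (B.orthogonal W) (B.orthogonal W) := by
  intro x hx w hw
  have h := hf w x
  change B w (f x) = 0
  rw [Pi.neg_apply, map_neg, hx (f w) (hW hw)] at h
  exact neg_eq_zero.1 h.symm

variable [FiniteDimensional K V]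

theorem exists_mem_orthogonal_notMem_forall_apply_mem (hB : B.Nondegenerate)
    (S : Set (Module.End K V)) (hcomm : ∀ f ∈ S, ∀ g ∈ S, Commute f g)
    (hnil : ∀ f ∈ S, IsNilpotent f) (hskew : ∀ f ∈ S, LinearMap.IsSkewAdjoint B f)
    {W : Submodule K V} (hiso : W ≤ B.orthogonal W) (hW : ∀ f ∈ S, MapsTo f W W)
    (hdim : 2 * finrank K W < finrank K V) :
    ∃ v ∈ B.orthogonal W, v ∉ W ∧ ∀ f ∈ S, f v ∈ W := by
  have hlt : W < B.orthogonal W :=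
    Submodule.lt_of_le_of_finrank_lt_finrank hiso (by rw [finrank_orthogonal hB]; omega)
  exact exists_mem_notMem_forall_apply_mem_of_commute S hcomm hnil hlt hW
    fun f hf => mapsTo_orthogonal (hskew f hf) (hW f hf)

theorem exists_isotropic_flag_basis (hB : B.Nondegenerate) (hBalt : B.IsAlt)
    (S : Set (Module.End K V)) (hcomm : ∀ f ∈ S, ∀ g ∈ S, Commute f g)
    (hnil : ∀ f ∈ S, IsNilpotent f) (hskew : ∀ f ∈ S, LinearMap.IsSkewAdjoint B f) :
    ∀ n, 2 * n ≤ finrank K V → ∃ e : Fin n → V, LinearIndependent K e ∧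
      (∀ i j, B (e i) (e j) = 0) ∧ ∀ f ∈ S, ∀ i, f (e i) ∈ span K (e '' Iio i)
  | 0, _ => ⟨Fin.elim0, linearIndependent_empty_type, fun i => i.elim0, fun _ _ i => i.elim0⟩
  | n + 1, hn => by
    obtain ⟨e, hli, hiso, hS⟩ :=
      exists_isotropic_flag_basis hB hBalt S hcomm hnil hskew n (by omega)
    have hW : ∀ f ∈ S, MapsTo f (span K (Set.range e)) (span K (Set.range e)) := by
      intro f hf x hx
      refine (span_le (p := (span K (Set.range e)).comap f)).2 ?_ hx
      rintro - ⟨i, rfl⟩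
      exact span_mono (image_subset_range _ _) (hS f hf i)
    obtain ⟨v, hvW, hv, hfv⟩ := exists_mem_orthogonal_notMem_forall_apply_mem hB S hcomm hnil
      hskew (span_le_orthogonal_span (by rintro - ⟨i, rfl⟩ - ⟨j, rfl⟩; exact hiso i j)) hW
      (by rw [finrank_span_eq_card hli, Fintype.card_fin]; omega)
    have hev : ∀ i, B (e i) v = 0 := fun i => hvW (e i) (subset_span ⟨i, rfl⟩)
    refine ⟨Fin.snoc e v, linearIndependent_finSnoc.2 ⟨hli, hv⟩, ?_, ?_⟩
    · intro i j
      induction i using Fin.lastCases <;> induction j using Fin.lastCases <;>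
        simp only [Fin.snoc_castSucc, Fin.snoc_last, hiso, hev, hBalt.eq_iff.1 (hev _)]
      exact hBalt v
    · intro f hf i
      induction i using Fin.lastCases with
      | last => simpa [Fin.snoc_image_Iio_last] using hfv f hf
      | cast i => simpa [Fin.snoc_image_Iio_castSucc] using hS f hf i

theorem exists_apply_eq_ite_of_linearIndependent (hB : B.Nondegenerate) {n : ℕ}
    {e : Fin n → V} (hli : LinearIndependent K e) :
    ∃ f : Fin n → V, ∀ i j, B (e i) (f j) = if i = j then 1 else 0 := by
  have hφ : ∀ j, ∃ φ : Module.Dual K V, ∀ i, φ (e i) = if i = j then 1 else 0 := by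
    intro j
    obtain ⟨φ, hφ⟩ := LinearMap.exists_extend ((Basis.span hli).coord j)
    refine ⟨φ, fun i => ?_⟩
    simpa [Basis.span_apply, Finsupp.single_apply] using LinearMap.congr_fun hφ (Basis.span hli i)
  choose φ hφ using hφ
  exact ⟨fun j => (B.flip.toDual hB.flip).symm (φ j), fun i j =>
    (apply_toDual_symm_apply (B := B.flip) _ _).trans (hφ j i)⟩

theorem exists_isotropic_dual_family (hB : B.Nondegenerate) (hBalt : B.IsAlt) {n : ℕ}
    {e : Fin n → V} (hli : LinearIndependent K e) (hiso : ∀ i j, B (e i) (e j) = 0) :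
    ∃ f : Fin n → V, (∀ i j, B (e i) (f j) = if i = j then 1 else 0) ∧
      ∀ i j, B (f i) (f j) = 0 := by
  obtain ⟨g, hg⟩ := exists_apply_eq_ite_of_linearIndependent hB hli
  have hge : ∀ i l, B (g i) (e l) = -if l = i then 1 else 0 := fun i l => by
    rw [← hg, LinearMap.IsAlt.neg hBalt]
  -- Correcting `g` by the strictly upper triangular part `c` of its alternating Gram matrix.
  let c : Fin n → Fin n → K := fun l j => if l < j then B (g l) (g j) else 0
  let f : Fin n → V := fun j => g j + ∑ l, c l j • e l
  have hff : ∀ i j, B (f i) (f j) = B (g i) (g j) - c i j + c j i := fun i j => by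
    simp only [f, map_add, map_sum, map_smul, LinearMap.add_apply, LinearMap.coe_sum,
      LinearMap.coe_smul, Finset.sum_apply, Pi.smul_apply, smul_eq_mul, hg, hge, hiso, mul_neg,
      mul_ite, mul_one, mul_zero, Finset.sum_neg_distrib, Finset.sum_ite_eq', Finset.mem_univ,
      if_true, Finset.sum_const_zero, add_zero]
    ring
  refine ⟨f, fun i j => by simp [f, hiso, hg], fun i j => ?_⟩
  rw [hff]
  rcases lt_trichotomy i j with h | rfl | h
  · simp [c, h, h.not_gt]
  · simp [c, hBalt (g i)]
  · simp [c, h, h.not_gt, ← LinearMap.IsAlt.neg hBalt (g i)]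

end LinearMap.BilinForm

section StandardSymplectic

variable {k : Type*} [Field k] {m : ℕ}

abbrev stdSymplecticForm (k : Type*) [Field k] (m : ℕ) :
    LinearMap.BilinForm k ((Fin m ⊕ Fin m) → k) :=
  toLinearMap₂' k (Jstd k m)

lemma Jstd_mul_Jstd : Jstd k m * Jstd k m = -1 := by
  simp [Jstd, fromBlocks_multiply, ← fromBlocks_one, fromBlocks_neg]

lemma isUnit_det_Jstd : IsUnit (Jstd k m).det :=
  isUnit_det_of_right_inverse (B := -Jstd k m) (by rw [mul_neg, Jstd_mul_Jstd, neg_neg])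

lemma stdSymplecticForm_nondegenerate : (stdSymplecticForm k m).Nondegenerate :=
  LinearMap.nondegenerate_toLinearMap₂'_iff_det_ne_zero.2 isUnit_det_Jstd.ne_zero

lemma stdSymplecticForm_isAlt : (stdSymplecticForm k m).IsAlt := by
  intro v
  simp [toLinearMap₂'_apply', Jstd, fromBlocks_mulVec, dotProduct, Fintype.sum_sum_type,
    neg_mulVec, mul_comm]

lemma isSkewAdjoint_stdSymplecticForm_toLin' {X : Matrix (Fin m ⊕ Fin m) (Fin m ⊕ Fin m) k}
    (hX : Xᵀ * Jstd k m + Jstd k m * X = 0) :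
    LinearMap.IsSkewAdjoint (stdSymplecticForm k m) (toLin' X) := by
  rw [LinearMap.IsSkewAdjoint, ← LinearMap.coe_neg, ← map_neg, isAdjointPair_toLinearMap₂',
    Matrix.IsAdjointPair, mul_neg, eq_neg_iff_add_eq_zero, hX]

/-- The least `t` such that the standard basis vector `c` lies in `stdFlag k m t`. -/
def stdLevel (m : ℕ) : Fin m ⊕ Fin m → ℕ :=
  Sum.elim (fun i => i + 1) (fun j => 2 * m - j)

lemma stdFlag_eq_span_basisFun (t : ℕ) :
    stdFlag k m t = span k (Pi.basisFun k (Fin m ⊕ Fin m) '' {c | stdLevel m c ≤ t}) := by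
  rw [stdFlag]
  congr 1
  ext x
  simp [stdLevel, Sum.exists, add_comm]

lemma mem_stdFlag_iff {t : ℕ} {v : Fin m ⊕ Fin m → k} :
    v ∈ stdFlag k m t ↔ ∀ c, t < stdLevel m c → v c = 0 := by
  rw [stdFlag_eq_span_basisFun, Basis.mem_span_image]
  simp [subset_def, not_imp_comm]

lemma mulVec_mem_stdFlag_sub_one {Y : Matrix (Fin m ⊕ Fin m) (Fin m ⊕ Fin m) k}
    (hY : ∀ r c, Y r c ≠ 0 → stdLevel m r < stdLevel m c) {t : ℕ} {v : Fin m ⊕ Fin m → k}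
    (hv : v ∈ stdFlag k m t) : Y *ᵥ v ∈ stdFlag k m (t - 1) := by
  rw [mem_stdFlag_iff] at hv ⊢
  refine fun r hr => (Finset.sum_eq_zero fun c _ => ?_ : ∑ c, Y r c * v c = 0)
  by_contra h
  obtain ⟨hYrc, hvc⟩ := mul_ne_zero_iff.1 h
  have hlt := hY r c hYrc
  have hle : stdLevel m c ≤ t := not_lt.1 (mt (hv c) hvc)
  omega

lemma stdLevel_lt_of_apply_ne_zero {Y : Matrix (Fin m ⊕ Fin m) (Fin m ⊕ Fin m) k}
    (hY : Yᵀ * Jstd k m + Jstd k m * Y = 0)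
    (hcol : ∀ c : Fin m, Y *ᵥ Pi.single (Sum.inl c) 1 ∈ stdFlag k m c) :
    ∀ r c, Y r c ≠ 0 → stdLevel m r < stdLevel m c := by
  have hinl : ∀ r c, Y r (Sum.inl c) ≠ 0 → stdLevel m r ≤ c := fun r c h => by
    by_contra hlt
    exact h (by simpa [mulVec_single_one] using mem_stdFlag_iff.1 (hcol c) r (not_le.1 hlt))
  have hinr : ∀ r c, Y (Sum.inr r) (Sum.inr c) = -Y (Sum.inl c) (Sum.inl r) := fun r c => by
    have := congr_fun (congr_fun hY (Sum.inl r)) (Sum.inr c)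
    simp only [Jstd, Matrix.add_apply, Matrix.mul_apply, transpose_apply, Fintype.sum_sum_type,
      fromBlocks_apply₁₁, fromBlocks_apply₁₂, fromBlocks_apply₂₂, Matrix.zero_apply, one_apply,
      mul_ite, ite_mul, mul_one, one_mul, mul_zero, zero_mul, Finset.sum_ite_eq,
      Finset.sum_ite_eq', Finset.mem_univ, if_true, Finset.sum_const_zero, add_zero,
      zero_add] at this
    linear_combination this
  rintro (r | r) (c | c) h
  · exact Nat.lt_succ_of_le (hinl _ c h)
  · change r + 1 < 2 * m - c
    omega
  · have := hinl _ c h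
    change 2 * m - r ≤ c at this
    omega
  · rw [hinr, neg_ne_zero] at h
    have := hinl _ r h
    change (c : ℕ) + 1 ≤ r at this
    change 2 * m - r < 2 * m - c
    omega

end StandardSymplectic

section SymplecticConjugation

variable {n R : Type*} [Fintype n] [CommRing R] {J g : Matrix n n R}

lemma of_mul_mul_transpose_of (J : Matrix n n R) (b : n → n → R) :
    of b * J * (of b)ᵀ = of fun c d => b c ⬝ᵥ J *ᵥ b d := by
  ext c d
  simp only [mul_apply, of_apply, transpose_apply, dotProduct, mulVec, Finset.sum_mul,
    Finset.mul_sum]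
  rw [Finset.sum_comm]
  exact Finset.sum_congr rfl fun _ _ => Finset.sum_congr rfl fun _ _ => by ring

variable [DecidableEq n]

lemma isUnit_det_of_transpose_mul_mul_eq (hJ : IsUnit J.det) (hg : gᵀ * J * g = J) :
    IsUnit g.det :=
  isUnit_of_mul_isUnit_right (x := (gᵀ * J).det) (by rw [← det_mul, hg]; exact hJ)

lemma transpose_nonsing_inv_mul_mul_nonsing_inv (hg : IsUnit g.det) (hgJ : gᵀ * J * g = J) :
    (g⁻¹)ᵀ * J * g⁻¹ = J := by
  conv_lhs => rw [← hgJ]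
  rw [← Matrix.mul_assoc, ← Matrix.mul_assoc, ← transpose_mul, mul_nonsing_inv _ hg,
    transpose_one, Matrix.one_mul, Matrix.mul_assoc, mul_nonsing_inv _ hg, Matrix.mul_one]

lemma transpose_mul_add_mul_eq_zero_conj (hg : IsUnit g.det) (hgJ : gᵀ * J * g = J)
    {X : Matrix n n R} (hX : Xᵀ * J + J * X = 0) :
    (g * X * g⁻¹)ᵀ * J + J * (g * X * g⁻¹) = 0 := by
  have h₁ : gᵀ * J = J * g⁻¹ := by
    conv_rhs => rw [← hgJ]
    rw [Matrix.mul_assoc _ g, mul_nonsing_inv _ hg, Matrix.mul_one]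
  have h₂ : J * g = (g⁻¹)ᵀ * J := by
    conv_rhs => rw [← hgJ]
    rw [← Matrix.mul_assoc, ← Matrix.mul_assoc, ← transpose_mul, mul_nonsing_inv _ hg,
      transpose_one, Matrix.one_mul]
  calc (g * X * g⁻¹)ᵀ * J + J * (g * X * g⁻¹)
      = (g⁻¹)ᵀ * (Xᵀ * (gᵀ * J)) + (J * g) * X * g⁻¹ := by
        simp only [transpose_mul, Matrix.mul_assoc]
    _ = (g⁻¹)ᵀ * (Xᵀ * J + J * X) * g⁻¹ := by
        rw [h₁, h₂]; simp only [Matrix.mul_add, Matrix.add_mul, Matrix.mul_assoc]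
    _ = 0 := by rw [hX, Matrix.mul_zero, Matrix.zero_mul]

end SymplecticConjugation

section FlagOfBasis

variable {k : Type*} [Field k] {m : ℕ} {e : Fin m → (Fin m ⊕ Fin m → k)}
  {𝒳 : Set (Matrix (Fin m ⊕ Fin m) (Fin m ⊕ Fin m) k)}

theorem exists_invariant_isotropic_flag (hli : LinearIndependent k e)
    (hiso : ∀ i j, stdSymplecticForm k m (e i) (e j) = 0)
    (h𝒳 : ∀ X ∈ 𝒳, ∀ i, X *ᵥ e i ∈ span k (e '' Iio i)) :
    ∃ V : ℕ → Submodule k ((Fin m ⊕ Fin m) → k),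
       V 0 = ⊥ ∧
       (∀ i, i ≤ m → Module.finrank k (V i) = i) ∧
       (∀ i, i < m → V i ≤ V (i + 1)) ∧
       (∀ i, i ≤ m → ∀ v ∈ V i, ∀ w ∈ V i, v ⬝ᵥ (Jstd k m).mulVec w = 0) ∧
       (∀ X ∈ 𝒳, ∀ i, i ≤ m → ∀ v ∈ V i, X.mulVec v ∈ V i) := by
  refine ⟨fun t => span k (e '' {i | (i : ℕ) < t}), by simp, fun t ht => ?_,
    fun t _ => span_mono (image_mono fun i (hi : (i : ℕ) < t) => Nat.lt_succ_of_lt hi),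
    fun t _ v hv w hw => ?_, fun X hX t _ v hv => ?_⟩
  · change finrank k (span k (e '' {i | (i : ℕ) < t})) = t
    rw [← Fin.range_castLE ht, ← range_comp,
      finrank_span_eq_card (hli.comp _ (Fin.castLE_injective ht)), Fintype.card_fin]
  · rw [← toLinearMap₂'_apply']
    exact LinearMap.BilinForm.span_le_orthogonal_span
      (by rintro - ⟨i, -, rfl⟩ - ⟨j, -, rfl⟩; exact hiso i j) hw v hv
  · refine (span_le (p := (span k (e '' {i | (i : ℕ) < t})).comap X.mulVecLin)).2 ?_ hv
    rintro - ⟨i, hi, rfl⟩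
    exact span_mono (image_mono fun j (hj : j < i) => (Fin.lt_def.1 hj).trans hi) (h𝒳 X hX i)

theorem exists_symplectic_conj_mulVec_mem_stdFlag {f : Fin m → (Fin m ⊕ Fin m → k)}
    (hee : ∀ i j, stdSymplecticForm k m (e i) (e j) = 0)
    (hef : ∀ i j, stdSymplecticForm k m (e i) (f j) = if i = j then 1 else 0)
    (hff : ∀ i j, stdSymplecticForm k m (f i) (f j) = 0)
    (h𝒳sp : ∀ X ∈ 𝒳, Xᵀ * Jstd k m + Jstd k m * X = 0)
    (h𝒳 : ∀ X ∈ 𝒳, ∀ i, X *ᵥ e i ∈ span k (e '' Iio i)) :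
    ∃ g : Matrix (Fin m ⊕ Fin m) (Fin m ⊕ Fin m) k,
       IsUnit g ∧ gᵀ * Jstd k m * g = Jstd k m ∧
       ∀ X ∈ 𝒳, ∀ t, 1 ≤ t → t ≤ 2 * m →
         ∀ v ∈ stdFlag k m t, (g * X * g⁻¹).mulVec v ∈ stdFlag k m (t - 1) := by
  -- The columns of `h` are the symplectic basis `e, f`; the conjugating matrix is `h⁻¹`.
  set h : Matrix (Fin m ⊕ Fin m) (Fin m ⊕ Fin m) k := (of (Sum.elim e f))ᵀ
  have hgram : hᵀ * Jstd k m * h = Jstd k m := by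
    rw [transpose_transpose, of_mul_mul_transpose_of]
    ext (i | i) (j | j) <;>
      simp only [of_apply, Sum.elim_inl, Sum.elim_inr, ← toLinearMap₂'_apply']
    · rw [hee]; simp [Jstd]
    · rw [hef]; simp [Jstd, one_apply]
    · rw [← LinearMap.IsAlt.neg (stdSymplecticForm_isAlt (k := k) (m := m)), hef]
      simp [Jstd, one_apply, eq_comm]
    · rw [hff]; simp [Jstd]
  have hh : IsUnit h.det := isUnit_det_of_transpose_mul_mul_eq isUnit_det_Jstd hgram
  have hinv_e : ∀ i, h⁻¹ *ᵥ e i = Pi.single (Sum.inl i) 1 := fun i => by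
    rw [← show h *ᵥ Pi.single (Sum.inl i) 1 = e i by rw [mulVec_single_one]; rfl, mulVec_mulVec,
      nonsing_inv_mul _ hh, one_mulVec]
  have hg : IsUnit h⁻¹.det := isUnit_nonsing_inv_det h hh
  have hgJ := transpose_nonsing_inv_mul_mul_nonsing_inv hh hgram
  refine ⟨h⁻¹, (isUnit_iff_isUnit_det _).2 hg, hgJ, fun X hX t _ _ v hv => ?_⟩
  refine mulVec_mem_stdFlag_sub_one (stdLevel_lt_of_apply_ne_zero
    (transpose_mul_add_mul_eq_zero_conj hg hgJ (h𝒳sp X hX)) fun c => ?_) hv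
  rw [nonsing_inv_nonsing_inv h hh, ← mulVec_mulVec, ← mulVec_mulVec, mulVec_single_one]
  have hmap := Submodule.mem_map_of_mem (f := h⁻¹.mulVecLin) (h𝒳 X hX c)
  rw [Submodule.map_span, ← image_comp] at hmap
  refine span_mono ?_ hmap
  rintro - ⟨i, hi, rfl⟩
  exact Or.inl ⟨i, hi, (hinv_e i).symm⟩

end FlagOfBasis

theorem stmt_6_general {k : Type*} [Field k] {p : ℕ} (m : ℕ)
    (ε : LieSubalgebra k (Matrix (Fin m ⊕ Fin m) (Fin m ⊕ Fin m) k))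
    (hsp : ∀ X ∈ ε, Xᵀ * Jstd k m + Jstd k m * X = 0)
    (habelian : ∀ X ∈ ε, ∀ Y ∈ ε, ⁅X, Y⁆ = 0)
    (hpnil : ∀ X ∈ ε, X ^ p = 0) :
    -- (a) there is an `ε`-invariant complete isotropic flag:
    (∃ V : ℕ → Submodule k ((Fin m ⊕ Fin m) → k),
       V 0 = ⊥ ∧
       (∀ i, i ≤ m → Module.finrank k (V i) = i) ∧
       (∀ i, i < m → V i ≤ V (i + 1)) ∧
       (∀ i, i ≤ m → ∀ v ∈ V i, ∀ w ∈ V i, v ⬝ᵥ (Jstd k m).mulVec w = 0) ∧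
       (∀ X ∈ ε, ∀ i, i ≤ m → ∀ v ∈ V i, X.mulVec v ∈ V i))
    ∧
    -- (b) consequently `ε` is conjugate under the symplectic group into the
    -- nilpotent radical of the standard Borel:
    (∃ g : Matrix (Fin m ⊕ Fin m) (Fin m ⊕ Fin m) k,
       IsUnit g ∧ gᵀ * Jstd k m * g = Jstd k m ∧
       ∀ X ∈ ε, ∀ t, 1 ≤ t → t ≤ 2 * m →
         ∀ v ∈ stdFlag k m t, (g * X * g⁻¹).mulVec v ∈ stdFlag k m (t - 1)) := by
  set S : Set (Module.End k (Fin m ⊕ Fin m → k)) := toLin' '' (ε : Set _)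
  have hcomm : ∀ f ∈ S, ∀ g ∈ S, Commute f g := by
    rintro - ⟨X, hX, rfl⟩ - ⟨Y, hY, rfl⟩
    have hXY := habelian X hX Y hY
    rw [Ring.lie_def, sub_eq_zero] at hXY
    rw [Commute, SemiconjBy, Module.End.mul_eq_comp, Module.End.mul_eq_comp, ← toLin'_mul,
      ← toLin'_mul, hXY]
  have hnil : ∀ f ∈ S, IsNilpotent f := by
    rintro - ⟨X, hX, rfl⟩
    exact (isNilpotent_toLin'_iff X).2 ⟨p, hpnil X hX⟩
  have hskew : ∀ f ∈ S, LinearMap.IsSkewAdjoint (stdSymplecticForm k m) f := by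
    rintro - ⟨X, hX, rfl⟩
    exact isSkewAdjoint_stdSymplecticForm_toLin' (hsp X hX)
  obtain ⟨e, hli, hiso, hS⟩ := LinearMap.BilinForm.exists_isotropic_flag_basis
    stdSymplecticForm_nondegenerate stdSymplecticForm_isAlt S hcomm hnil hskew m
    (by simp [two_mul])
  have hε : ∀ X ∈ (ε : Set _), ∀ i, X *ᵥ e i ∈ span k (e '' Iio i) :=
    fun X hX => hS _ ⟨X, hX, rfl⟩
  obtain ⟨f, hef, hff⟩ := LinearMap.BilinForm.exists_isotropic_dual_family
    stdSymplecticForm_nondegenerate stdSymplecticForm_isAlt hli hiso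
  exact ⟨exists_invariant_isotropic_flag hli hiso hε,
    exists_symplectic_conj_mulVec_mem_stdFlag hiso hef hff hsp hε⟩

/-- any elementary subalgebra `ε` of `sp_{2m}(k)` (pairwise commuting,
`p`-nilpotent) leaves some complete isotropic flag invariant; consequently `ε` is
conjugate under `Sp_{2m}(k)` into the nilpotent radical of the standard Borel
subalgebra (elements moving each member of the standard complete flag into the
previous one). -/
theorem stmt_6 {k : Type*} [Field k] [IsAlgClosed k] {p : ℕ} [Fact p.Prime] [CharP k p]
    (hp : p ≠ 2) (m : ℕ)
    (ε : LieSubalgebra k (Matrix (Fin m ⊕ Fin m) (Fin m ⊕ Fin m) k))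
    (hsp : ∀ X ∈ ε, Xᵀ * Jstd k m + Jstd k m * X = 0)
    (habelian : ∀ X ∈ ε, ∀ Y ∈ ε, ⁅X, Y⁆ = 0)
    (hpnil : ∀ X ∈ ε, X ^ p = 0) :
    -- (a) there is an `ε`-invariant complete isotropic flag:
    (∃ V : ℕ → Submodule k ((Fin m ⊕ Fin m) → k),
       V 0 = ⊥ ∧
       (∀ i, i ≤ m → Module.finrank k (V i) = i) ∧
       (∀ i, i < m → V i ≤ V (i + 1)) ∧
       (∀ i, i ≤ m → ∀ v ∈ V i, ∀ w ∈ V i, v ⬝ᵥ (Jstd k m).mulVec w = 0) ∧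
       (∀ X ∈ ε, ∀ i, i ≤ m → ∀ v ∈ V i, X.mulVec v ∈ V i))
    ∧
    -- (b) consequently `ε` is conjugate under the symplectic group into the
    -- nilpotent radical of the standard Borel:
    (∃ g : Matrix (Fin m ⊕ Fin m) (Fin m ⊕ Fin m) k,
       IsUnit g ∧ gᵀ * Jstd k m * g = Jstd k m ∧
       ∀ X ∈ ε, ∀ t, 1 ≤ t → t ≤ 2 * m →
         ∀ v ∈ stdFlag k m t, (g * X * g⁻¹).mulVec v ∈ stdFlag k m (t - 1)) :=
  stmt_6_general m ε hsp habelian hpnil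
end

section
/- Let k be a field of characteristic p > 0, let n ≥ 1 and i < p a positive integer. For every monomial x_1^{i_1}⋯x_n^{i_n} of total degree i in the polynomial ring k[x_1,…,x_n], there exist finitely many homogeneous linear forms λ_0,…,λ_m in x_1,…,x_n and scalars a_0,…,a_m ∈ k such that x_1^{i_1}⋯x_n^{i_n} = a_0 λ_0^i + ⋯ + a_m λ_m^i. -/
open MvPolynomial

/-!
Polarization: for `y : ι → R` in a commutative ring, with `i = |ι|`,
`∑_{S ⊆ ι} (-1)^{|ι \ S|} (∑_{m ∈ S} y m)^i = i! ∏_m y m`, since after expanding the powers a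
product `∏_m y (g m)` survives the alternating sum only when `g` is onto. A monomial of degree `i`
is such a product of `i` variables taken with multiplicity, and `i!` is invertible because `i < p`.
-/

open Finset
open scoped Nat

theorem Finset.sum_superset_neg_one_pow_card_compl {α : Type*} [Fintype α] [DecidableEq α]
    (T : Finset α) :
    ∑ S with T ⊆ S, (-1 : ℤ) ^ #Sᶜ = if T = univ then 1 else 0 := by
  have hcompl : ∑ S with T ⊆ S, (-1 : ℤ) ^ #Sᶜ = ∑ U ∈ Tᶜ.powerset, (-1 : ℤ) ^ #U := by
    rw [← filter_subset_univ, sum_filter, sum_filter]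
    exact Fintype.sum_equiv (compl_involutive.toPerm _) _ _ fun S => by simp
  simp only [hcompl, sum_powerset_neg_one_pow_card, compl_eq_empty_iff]

theorem Finset.image_univ_eq_univ_iff_bijective {ι : Type*} [Fintype ι] [DecidableEq ι]
    (g : ι → ι) : image g univ = univ ↔ Function.Bijective g := by
  rw [eq_univ_iff_forall]
  simp only [mem_image, mem_univ, true_and]
  exact Finite.surjective_iff_bijective

theorem Finset.sum_neg_one_pow_card_compl_smul_sum_pow {ι R : Type*} [Fintype ι] [DecidableEq ι]
    [CommRing R] (y : ι → R) :
    ∑ S : Finset ι, (-1 : ℤ) ^ #Sᶜ • (∑ m ∈ S, y m) ^ Fintype.card ι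
      = (Fintype.card ι)! • ∏ m, y m := by
  have hpow (S : Finset ι) : (∑ m ∈ S, y m) ^ Fintype.card ι
      = ∑ g : ι → ι with ∀ m, g m ∈ S, ∏ m, y (g m) := by
    rw [← card_univ, ← prod_const, prod_univ_sum]
    congr 1; ext g; simp [Fintype.mem_piFinset]
  calc ∑ S : Finset ι, (-1 : ℤ) ^ #Sᶜ • (∑ m ∈ S, y m) ^ Fintype.card ι
      = ∑ g : ι → ι, (∑ S with image g univ ⊆ S, (-1 : ℤ) ^ #Sᶜ) • ∏ m, y (g m) := by
        simp only [hpow, smul_sum, sum_filter, sum_smul]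
        rw [sum_comm]
        simp [image_subset_iff, ite_smul]
    _ = ∑ g : ι → ι with Function.Bijective g, ∏ m, y (g m) := by
        refine (sum_congr rfl fun g _ => ?_).trans (sum_filter _ _).symm
        simp only [sum_superset_neg_one_pow_card_compl, image_univ_eq_univ_iff_bijective,
          ite_smul, one_smul, zero_smul]
    _ = ∑ σ : Equiv.Perm ι, ∏ m, y (σ m) := by
        rw [← sum_subtype_eq_sum_filter, subtype_univ]
        exact Fintype.sum_equiv Equiv.bijectiveEquiv _ _ fun _ => rfl
    _ = (Fintype.card ι)! • ∏ m, y m := by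
        simp [Equiv.Perm.prod_comp, Fintype.card_perm]

theorem Submodule.factorial_smul_prod_mem_span_image_pow {R A ι : Type*} [Ring R] [CommRing A]
    [Module R A] [Fintype ι] (V : Submodule R A) (y : ι → A) (hy : ∀ m, y m ∈ V) :
    (Fintype.card ι)! • ∏ m, y m ∈ span R ((· ^ Fintype.card ι) '' V) := by
  classical
  rw [← sum_neg_one_pow_card_compl_smul_sum_pow]
  exact sum_mem fun S _ =>
    zsmul_mem (subset_span (Set.mem_image_of_mem _ (sum_mem fun m _ => hy m))) _

theorem Submodule.prod_mem_span_image_pow {K A ι : Type*} [Field K] [CommRing A] [Module K A]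
    [Fintype ι] (V : Submodule K A) (y : ι → A) (hy : ∀ m, y m ∈ V)
    (hfac : ((Fintype.card ι)! : K) ≠ 0) :
    ∏ m, y m ∈ span K ((· ^ Fintype.card ι) '' V) := by
  rw [← smul_mem_iff _ hfac, Nat.cast_smul_eq_nsmul]
  exact factorial_smul_prod_mem_span_image_pow V y hy

theorem Submodule.exists_fin_succ_of_mem_span_range {R M ι : Type*} [Semiring R]
    [AddCommMonoid M] [Module R M] [Nonempty ι] {f : ι → M} {x : M}
    (hx : x ∈ span R (Set.range f)) :
    ∃ (m : ℕ) (a : Fin (m + 1) → R) (c : Fin (m + 1) → ι), x = ∑ j, a j • f (c j) := by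
  obtain ⟨m, a, g, rfl⟩ := mem_span_set'.mp hx
  choose c hc using fun j => (g j).2
  exact ⟨m, Fin.cons 0 a, Fin.cons (Classical.arbitrary ι) c, by simp [Fin.sum_univ_succ, hc]⟩

theorem CharP.cast_factorial_ne_zero_of_lt {K : Type*} [AddMonoidWithOne K] {p : ℕ}
    [Fact p.Prime] [CharP K p] {i : ℕ} (hip : i < p) : (i ! : K) ≠ 0 := by
  rw [Ne, CharP.cast_eq_zero_iff K p, Nat.Prime.dvd_factorial Fact.out]
  omega

theorem MvPolynomial.prod_X_sigma_eq_monomial {R σ : Type*} [CommSemiring R] [Fintype σ]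
    (d : σ →₀ ℕ) : ∏ x : Σ l, Fin (d l), (X x.1 : MvPolynomial σ R) = monomial d 1 := by
  rw [Fintype.prod_sigma, monomial_eq, C_1, one_mul, Finsupp.prod_fintype _ _ (fun _ => pow_zero _)]
  simp

theorem stmt_8_general {k : Type*} [Field k] {p : ℕ} [Fact p.Prime] [CharP k p]
    (n : ℕ) (i : ℕ) (hip : i < p)
    (d : Fin n →₀ ℕ) (hd : (d.sum fun _ e => e) = i) :
    ∃ (m : ℕ) (a : Fin (m + 1) → k) (c : Fin (m + 1) → Fin n → k),
      (MvPolynomial.monomial d (1 : k)) =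
        ∑ j : Fin (m + 1), a j • (∑ l : Fin n, c j l • (MvPolynomial.X l : MvPolynomial (Fin n) k)) ^ i := by
  classical
  set L := Fintype.linearCombination k (X : Fin n → MvPolynomial (Fin n) k)
  have hcard : Fintype.card (Σ l, Fin (d l)) = i := by
    simp [← hd, Finsupp.sum_fintype]
  have hmem : monomial d (1 : k) ∈ Submodule.span k (Set.range fun c => L c ^ i) := by
    have := Submodule.prod_mem_span_image_pow (LinearMap.range L) (fun x => X x.1)
      (fun x => ⟨Pi.single x.1 1, by simp [L]⟩) (hcard ▸ CharP.cast_factorial_ne_zero_of_lt hip)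
    rwa [prod_X_sigma_eq_monomial, hcard, LinearMap.coe_range, ← Set.range_comp] at this
  obtain ⟨m, a, c, h⟩ := Submodule.exists_fin_succ_of_mem_span_range hmem
  exact ⟨m, a, c, by simpa [L, Fintype.linearCombination_apply] using h⟩

/-- over a field of characteristic `p > i`, every monomial of degree `i`
in `n` variables is a linear combination of `i`-th powers of homogeneous linear forms. -/
theorem stmt_8 {k : Type*} [Field k] {p : ℕ} [Fact p.Prime] [CharP k p]
    (n : ℕ) (hn : 1 ≤ n) (i : ℕ) (hi : 0 < i) (hip : i < p)
    (d : Fin n →₀ ℕ) (hd : (d.sum fun _ e => e) = i) :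
    ∃ (m : ℕ) (a : Fin (m + 1) → k) (c : Fin (m + 1) → Fin n → k),
      (MvPolynomial.monomial d (1 : k)) =
        ∑ j : Fin (m + 1), a j • (∑ l : Fin n, c j l • (MvPolynomial.X l : MvPolynomial (Fin n) k)) ^ i :=
  stmt_8_general n i hip d hd
end

section
/- Let g₁, …, g_s be finite-dimensional p-restricted Lie algebras over k and g = g₁ ⊕ ⋯ ⊕ g_s. If ε_i ⊆ g_i are elementary subalgebras of dimensions r_i, then ε₁ ⊕ ⋯ ⊕ ε_s is an elementary subalgebra of g of dimension r = Σ r_i. Moreover, if each r_i equals the maximal dimension of an elementary subalgebra of g_i, then every elementary subalgebra of g of dimension r is of this form, i.e., the map (ε₁,…,ε_s) ↦ ε₁ ⊕ ⋯ ⊕ ε_s from tuples of maximal-dimensional elementary subalgebras to elementary subalgebras of g of dimension r is a bijection. -/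
/-!
An elementary subalgebra `E ⊆ ⨁ gᵢ` projects onto elementary subalgebras `ηᵢ ⊆ gᵢ` (brackets
and `p`-powers are computed componentwise) with `E ⊆ ⨁ ηᵢ`. Maximality gives `dim ηᵢ ≤ rᵢ`, so
`dim E = ∑ rᵢ` forces `E = ⨁ ηᵢ` and `dim ηᵢ = rᵢ`; the decomposition is unique because
`ηᵢ` is recovered from `⨁ ηᵢ` as its `i`-th projection.
-/

open DirectSum

def LieSubalgebra.ofAbelian {R L : Type*} [CommRing R] [LieRing L] [LieAlgebra R L]
    (S : Submodule R L) (h : ∀ x ∈ S, ∀ y ∈ S, ⁅x, y⁆ = 0) : LieSubalgebra R L where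
  toSubmodule := S
  lie_mem' {x y} hx hy := (h x hx y hy).symm ▸ S.zero_mem

namespace DirectSum

section Submodules

variable {R ι : Type*} [Semiring R] [Fintype ι] [DecidableEq ι]
  {M : ι → Type*} [∀ i, AddCommMonoid (M i)] [∀ i, Module R (M i)]

theorem mem_iSup_map_lof_iff {η : ∀ i, Submodule R (M i)} {x : ⨁ i, M i} :
    x ∈ ⨆ i, (η i).map (lof R ι M i) ↔ ∀ i, x i ∈ η i := by
  constructor
  · have hle : ⨆ i, (η i).map (lof R ι M i) ≤
        (Submodule.pi Set.univ η).comap (coeFnLinearMap R) := by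
      refine iSup_le fun j => ?_
      rintro _ ⟨a, ha, rfl⟩ i -
      rcases eq_or_ne j i with rfl | hji
      · simpa [lof_apply] using ha
      · simp [lof_eq_of, of_eq_of_ne j i a hji.symm]
    exact fun hx i => hle hx i trivial
  · intro hx
    rw [← sum_univ_of x]
    exact Submodule.sum_mem_iSup fun i => ⟨x i, hx i, lof_eq_of R ι M i (x i)⟩

theorem le_iSup_map_lof_map_component (S : Submodule R (⨁ i, M i)) :
    S ≤ ⨆ i, (S.map (component R ι M i)).map (lof R ι M i) :=
  fun _ hx => mem_iSup_map_lof_iff.2 fun _ => Submodule.mem_map_of_mem hx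

theorem map_component_iSup_map_lof (η : ∀ i, Submodule R (M i)) (i : ι) :
    (⨆ j, (η j).map (lof R ι M j)).map (component R ι M i) = η i := by
  ext a
  refine ⟨fun ⟨x, hx, hxa⟩ => hxa ▸ mem_iSup_map_lof_iff.1 hx i, fun ha => ?_⟩
  refine ⟨lof R ι M i a, mem_iSup_map_lof_iff.2 fun j => ?_, lof_apply R i a⟩
  rcases eq_or_ne i j with rfl | hij
  · simpa [lof_apply] using ha
  · simp [lof_eq_of, of_eq_of_ne i j a hij.symm]

theorem iSup_map_lof_eq_range_lmap (η : ∀ i, Submodule R (M i)) :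
    ⨆ i, (η i).map (lof R ι M i) = LinearMap.range (lmap fun i => (η i).subtype) := by
  ext x
  simp [mem_iSup_map_lof_iff, range_lmap]

end Submodules

section FiniteDimensional

variable {K ι : Type*} [Field K] [Fintype ι] [DecidableEq ι]
  {M : ι → Type*} [∀ i, AddCommGroup (M i)] [∀ i, Module K (M i)] [∀ i, Module.Finite K (M i)]

theorem finrank_iSup_map_lof (η : ∀ i, Submodule K (M i)) :
    Module.finrank K ↥(⨆ i, (η i).map (lof K ι M i)) = ∑ i, Module.finrank K (η i) := by
  rw [iSup_map_lof_eq_range_lmap, LinearMap.finrank_range_of_inj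
    ((lmap_injective _).2 fun i => (η i).injective_subtype), Module.finrank_directSum]

theorem eq_iSup_map_lof_map_component_of_finrank (S : Submodule K (⨁ i, M i)) (r : ι → ℕ)
    (hr : ∀ i, Module.finrank K (S.map (component K ι M i)) ≤ r i)
    (hS : Module.finrank K S = ∑ i, r i) :
    S = ⨆ i, (S.map (component K ι M i)).map (lof K ι M i) ∧
      ∀ i, Module.finrank K (S.map (component K ι M i)) = r i := by
  have hsum_le : ∑ i, Module.finrank K (S.map (component K ι M i)) ≤ ∑ i, r i :=
    Finset.sum_le_sum fun i _ => hr i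
  have hS_eq : S = ⨆ i, (S.map (component K ι M i)).map (lof K ι M i) :=
    Submodule.eq_of_le_of_finrank_le (le_iSup_map_lof_map_component S)
      (by rw [finrank_iSup_map_lof, hS]; exact hsum_le)
  refine ⟨hS_eq, fun i => ?_⟩
  have hsum_eq : ∑ i, Module.finrank K (S.map (component K ι M i)) = ∑ i, r i := by
    rw [← finrank_iSup_map_lof, ← hS_eq, hS]
  exact (Finset.sum_eq_sum_iff_of_le fun i _ => hr i).1 hsum_eq i (Finset.mem_univ i)

end FiniteDimensional

section Lie

variable {ι : Type*} {L : ι → Type*} [∀ i, LieRing (L i)]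

theorem lie_eq_zero_iff {x y : ⨁ i, L i} : ⁅x, y⁆ = 0 ↔ ∀ i, ⁅x i, y i⁆ = 0 := by
  rw [DFinsupp.ext_iff]
  simp only [bracket_apply, zero_apply]

variable {R : Type*} [CommRing R] [∀ i, LieAlgebra R (L i)]

theorem lie_eq_zero_of_mem_map_component {S : Submodule R (⨁ i, L i)}
    (h : ∀ x ∈ S, ∀ y ∈ S, ⁅x, y⁆ = 0) (i : ι) :
    ∀ a ∈ S.map (component R ι L i), ∀ b ∈ S.map (component R ι L i), ⁅a, b⁆ = 0 := by
  rintro _ ⟨x, hx, rfl⟩ _ ⟨y, hy, rfl⟩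
  exact lie_eq_zero_iff.1 (h x hx y hy) i

variable [Fintype ι] [DecidableEq ι]

theorem lie_eq_zero_of_mem_iSup_map_lof {η : ∀ i, Submodule R (L i)}
    (h : ∀ i, ∀ a ∈ η i, ∀ b ∈ η i, ⁅a, b⁆ = 0) :
    ∀ x ∈ ⨆ i, (η i).map (lof R ι L i), ∀ y ∈ ⨆ i, (η i).map (lof R ι L i), ⁅x, y⁆ = 0 :=
  fun _ hx _ hy => lie_eq_zero_iff.2 fun i =>
    h i _ (mem_iSup_map_lof_iff.1 hx i) _ (mem_iSup_map_lof_iff.1 hy i)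

end Lie

end DirectSum

theorem stmt_15_general {k : Type*} [Field k]
    {ι : Type*} [Fintype ι] [DecidableEq ι]
    (L : ι → Type*) [∀ i, LieRing (L i)] [∀ i, LieAlgebra k (L i)]
    [∀ i, Module.Finite k (L i)]
    (pOp : ∀ i, L i → L i)                         -- the p-power operations
    (r : ι → ℕ)
    (ε : ∀ i, LieSubalgebra k (L i))
    (helem : ∀ i, (∀ x ∈ ε i, ∀ y ∈ ε i, ⁅x, y⁆ = 0) ∧ (∀ x ∈ ε i, pOp i x = 0))
    (hrk : ∀ i, Module.finrank k (ε i) = r i) :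
    -- (i) the direct sum of the `ε i` is an elementary subalgebra of dimension `∑ r i`:
    (∃ E : LieSubalgebra k (⨁ i, L i),
       E.toSubmodule = ⨆ i, (ε i).toSubmodule.map (DirectSum.lof k ι L i) ∧
       (∀ x ∈ E, ∀ y ∈ E, ⁅x, y⁆ = 0) ∧
       (∀ x ∈ E, ∀ i, pOp i (x i) = 0) ∧
       Module.finrank k E = ∑ i, r i)
    ∧
    -- (ii) if each `r i` is maximal, every elementary subalgebra of dimension `∑ r i`
    -- arises from a unique tuple of maximal-dimensional elementary subalgebras:
    ((∀ i, ∀ η : LieSubalgebra k (L i),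
        (∀ x ∈ η, ∀ y ∈ η, ⁅x, y⁆ = 0) → (∀ x ∈ η, pOp i x = 0) →
        Module.finrank k η ≤ r i) →
      ∀ E : LieSubalgebra k (⨁ i, L i),
        (∀ x ∈ E, ∀ y ∈ E, ⁅x, y⁆ = 0) →
        (∀ x ∈ E, ∀ i, pOp i (x i) = 0) →
        Module.finrank k E = ∑ i, r i →
        ∃! η : ∀ i, LieSubalgebra k (L i),
          (∀ i, (∀ x ∈ η i, ∀ y ∈ η i, ⁅x, y⁆ = 0) ∧ (∀ x ∈ η i, pOp i x = 0) ∧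
                Module.finrank k (η i) = r i) ∧
          E.toSubmodule = ⨆ i, (η i).toSubmodule.map (DirectSum.lof k ι L i)) := by
  refine ⟨?_, fun hmax E habel hpE hdim => ?_⟩
  · have habel_sum := lie_eq_zero_of_mem_iSup_map_lof fun i => (helem i).1
    refine ⟨LieSubalgebra.ofAbelian _ habel_sum, rfl, habel_sum,
      fun x hx i => (helem i).2 _ (mem_iSup_map_lof_iff.1 hx i), ?_⟩
    exact (finrank_iSup_map_lof _).trans (Finset.sum_congr rfl fun i _ => hrk i)
  · set η := fun i => E.toSubmodule.map (component k ι L i)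
    have habel_η := lie_eq_zero_of_mem_map_component habel
    have hp_η : ∀ i, ∀ a ∈ η i, pOp i a = 0 := by
      rintro i _ ⟨x, hx, rfl⟩
      exact hpE x hx i
    obtain ⟨hE, hrk_η⟩ := eq_iSup_map_lof_map_component_of_finrank E.toSubmodule r
      (fun i => hmax i (.ofAbelian _ (habel_η i)) (habel_η i) (hp_η i)) hdim
    refine ⟨fun i => .ofAbelian _ (habel_η i), ⟨fun i => ⟨habel_η i, hp_η i, hrk_η i⟩, hE⟩, ?_⟩
    rintro η' ⟨-, hη'⟩
    funext i
    exact LieSubalgebra.toSubmodule_injective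
      ((map_component_iSup_map_lof _ i).symm.trans (congrArg _ hη'.symm))

/-- for restricted Lie algebras `L i` (with `p`-operations `pOp i`),
direct sums of elementary subalgebras `ε i ⊆ L i` are elementary subalgebras of
`⨁ i, L i` of dimension `∑ r i`; and if each `r i` is the maximal dimension of an
elementary subalgebra of `L i`, then every elementary subalgebra of `⨁ i, L i` of
dimension `∑ r i` is uniquely of this form. -/
theorem stmt_15 {k : Type*} [Field k] {p : ℕ} [Fact p.Prime] [CharP k p]
    {ι : Type*} [Fintype ι] [DecidableEq ι]
    (L : ι → Type*) [∀ i, LieRing (L i)] [∀ i, LieAlgebra k (L i)]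
    [∀ i, Module.Finite k (L i)]
    (pOp : ∀ i, L i → L i)                         -- the p-power operations
    (r : ι → ℕ)
    (ε : ∀ i, LieSubalgebra k (L i))
    (helem : ∀ i, (∀ x ∈ ε i, ∀ y ∈ ε i, ⁅x, y⁆ = 0) ∧ (∀ x ∈ ε i, pOp i x = 0))
    (hrk : ∀ i, Module.finrank k (ε i) = r i) :
    -- (i) the direct sum of the `ε i` is an elementary subalgebra of dimension `∑ r i`:
    (∃ E : LieSubalgebra k (⨁ i, L i),
       E.toSubmodule = ⨆ i, (ε i).toSubmodule.map (DirectSum.lof k ι L i) ∧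
       (∀ x ∈ E, ∀ y ∈ E, ⁅x, y⁆ = 0) ∧
       (∀ x ∈ E, ∀ i, pOp i (x i) = 0) ∧
       Module.finrank k E = ∑ i, r i)
    ∧
    -- (ii) if each `r i` is maximal, every elementary subalgebra of dimension `∑ r i`
    -- arises from a unique tuple of maximal-dimensional elementary subalgebras:
    ((∀ i, ∀ η : LieSubalgebra k (L i),
        (∀ x ∈ η, ∀ y ∈ η, ⁅x, y⁆ = 0) → (∀ x ∈ η, pOp i x = 0) →
        Module.finrank k η ≤ r i) →
      ∀ E : LieSubalgebra k (⨁ i, L i),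
        (∀ x ∈ E, ∀ y ∈ E, ⁅x, y⁆ = 0) →
        (∀ x ∈ E, ∀ i, pOp i (x i) = 0) →
        Module.finrank k E = ∑ i, r i →
        ∃! η : ∀ i, LieSubalgebra k (L i),
          (∀ i, (∀ x ∈ η i, ∀ y ∈ η i, ⁅x, y⁆ = 0) ∧ (∀ x ∈ η i, pOp i x = 0) ∧
                Module.finrank k (η i) = r i) ∧
          E.toSubmodule = ⨆ i, (η i).toSubmodule.map (DirectSum.lof k ι L i)) :=
  stmt_15_general L pOp r ε helem hrk
end
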